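/- For every real number t ∈ [−1,1] and every real α ≥ log 3, the expression e^{−αt/2}·t·(2+t) − e^{αt/2}·t·(2−t) is nonpositive. -/

import Mathlib

/-!
The expression equals `t * ((2 + t) e^{-αt/2} - (2 - t) e^{αt/2})` and is even in `t`, so it suffices
to show `log (2 + t) - log (2 - t) ≤ α t` for `t ∈ [0, 1]`. The left side is convex on `[0, 2)`
(its derivative `4 / (4 - t²)` increases), vanishes at `0` and equals `log 3` at `1`, so it lies
below the chord `t log 3 ≤ α t`.
-/

open Real Set

lemma hasDerivAt_log_add_sub_log_sub {a t : ℝ} (ht : |t| < a) :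
    HasDerivAt (fun s => log (a + s) - log (a - s)) (2 * a / (a ^ 2 - t ^ 2)) t := by
  obtain ⟨hlt, hgt⟩ := abs_lt.mp ht
  have hplus : a + t ≠ 0 := by linarith
  have hminus : a - t ≠ 0 := by linarith
  have h : HasDerivAt (fun s => log (a + s) - log (a - s)) (1 / (a + t) - -1 / (a - t)) t :=
    (((hasDerivAt_id' t).const_add a).log hplus).sub (((hasDerivAt_id' t).const_sub a).log hminus)
  refine h.congr_deriv ?_
  rw [show a ^ 2 - t ^ 2 = (a + t) * (a - t) by ring]
  field_simp
  ring

lemma convexOn_log_add_sub_log_sub (a : ℝ) :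
    ConvexOn ℝ (Ico 0 a) (fun t => log (a + t) - log (a - t)) := by
  have hderiv : ∀ t ∈ Ioo 0 a, HasDerivAt (fun s => log (a + s) - log (a - s))
      (2 * a / (a ^ 2 - t ^ 2)) t := fun t ht =>
    hasDerivAt_log_add_sub_log_sub (by rw [abs_of_pos ht.1]; exact ht.2)
  rw [← interior_Ico] at hderiv
  refine MonotoneOn.convexOn_of_deriv (convex_Ico 0 a) ?_
    (fun t ht => (hderiv t ht).differentiableAt.differentiableWithinAt) ?_
  · intro t ht
    have hplus : a + t ≠ 0 := by linarith [ht.1, ht.2]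
    have hminus : a - t ≠ 0 := by linarith [ht.2]
    exact ContinuousAt.continuousWithinAt (by fun_prop (disch := assumption))
  · intro x hx y hy hxy
    rw [(hderiv x hx).deriv, (hderiv y hy).deriv]
    rw [interior_Ico] at hx hy
    gcongr
    · linarith [hx.1, hx.2]
    · nlinarith [hy.1, hy.2]
    · exact hx.1.le

lemma log_two_add_sub_log_two_sub_le {t : ℝ} (ht : t ∈ Icc (0 : ℝ) 1) :
    log (2 + t) - log (2 - t) ≤ t * log 3 := by
  have h := (convexOn_log_add_sub_log_sub 2).2 (x := 0) (y := 1) (by norm_num) (by norm_num)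
    (sub_nonneg.mpr ht.2) ht.1 (by ring)
  norm_num at h
  linarith

lemma two_add_mul_exp_le {t α : ℝ} (ht : t ∈ Icc (0 : ℝ) 1) (hα : log 3 ≤ α) :
    (2 + t) * exp (-(α * t) / 2) ≤ (2 - t) * exp (α * t / 2) := by
  have hplus : 0 < 2 + t := by linarith [ht.1]
  have hminus : 0 < 2 - t := by linarith [ht.2]
  have hlog : log (2 + t) - log (2 - t) ≤ t * α :=
    (log_two_add_sub_log_two_sub_le ht).trans (mul_le_mul_of_nonneg_left hα ht.1)
  rw [← exp_log hplus, ← exp_log hminus, ← exp_add, ← exp_add, exp_le_exp]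
  linarith

lemma mul_exp_sub_mul_exp_nonpos {t α : ℝ} (ht : t ∈ Icc (0 : ℝ) 1) (hα : log 3 ≤ α) :
    exp (-(α * t) / 2) * t * (2 + t) - exp (α * t / 2) * t * (2 - t) ≤ 0 := by
  have h := mul_le_mul_of_nonneg_left (two_add_mul_exp_le ht hα) ht.1
  linarith

theorem ell1_expr_nonpos (t α : ℝ) (ht : t ∈ Set.Icc (-1 : ℝ) 1) (hα : Real.log 3 ≤ α) :
    Real.exp (-(α * t) / 2) * t * (2 + t) - Real.exp (α * t / 2) * t * (2 - t) ≤ 0 := by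
  obtain ⟨hlo, hhi⟩ := ht
  rcases le_total 0 t with hnonneg | hnonpos
  · exact mul_exp_sub_mul_exp_nonpos ⟨hnonneg, hhi⟩ hα
  · have h := mul_exp_sub_mul_exp_nonpos (t := -t) ⟨neg_nonneg.2 hnonpos, by linarith⟩ hα
    rw [show -(α * -t) / 2 = α * t / 2 by ring, show α * -t / 2 = -(α * t) / 2 by ring] at h
    linarith
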